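/- Let T be a multiplicative BiHom-associative trialgebra over a field F, let (V, α_V, β_V) be a BiHom-module, and let F and G be 2-cocycles on T with values in V. Then the central extensions 0 → V → T_F → T → 0 and 0 → V → T_G → T → 0 are equivalent extensions if and only if F − G is a 2-coboundary; that is, equivalence classes of such central extensions correspond bijectively to elements of the second cohomology group H²(T,V) = Z²(T,V)/B²(T,V). -/

import Mathlib

/-- The raw data of a BiHom-associative trialgebra over a field `F`:
three bilinear operations `dv` (⊣), `vd` (⊢), `pp` (⊥) and two linear
structure maps `al` (α), `be` (β). -/
structure BHTData (F : Type*) [Field F] (T : Type*) [AddCommGroup T] [Module F T] where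
  dv : T →ₗ[F] T →ₗ[F] T
  vd : T →ₗ[F] T →ₗ[F] T
  pp : T →ₗ[F] T →ₗ[F] T
  al : T →ₗ[F] T
  be : T →ₗ[F] T

variable {F : Type*} [Field F] {T : Type*} [AddCommGroup T] [Module F T]
variable {V : Type*} [AddCommGroup V] [Module F V]
variable {S : Type*} [AddCommGroup S] [Module F S]

/-- The axioms of a BiHom-associative trialgebra. -/
def BHTData.IsBHT (A : BHTData F T) : Prop :=
  (∀ x, A.al (A.be x) = A.be (A.al x)) ∧
  (∀ x y z, A.dv (A.dv x y) (A.be z) = A.dv (A.al x) (A.dv y z)) ∧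
  (∀ x y z, A.dv (A.dv x y) (A.be z) = A.dv (A.al x) (A.vd y z)) ∧
  (∀ x y z, A.dv (A.vd x y) (A.be z) = A.vd (A.al x) (A.dv y z)) ∧
  (∀ x y z, A.vd (A.dv x y) (A.be z) = A.vd (A.al x) (A.vd y z)) ∧
  (∀ x y z, A.vd (A.vd x y) (A.be z) = A.vd (A.al x) (A.vd y z)) ∧
  (∀ x y z, A.dv (A.dv x y) (A.be z) = A.dv (A.al x) (A.pp y z)) ∧
  (∀ x y z, A.dv (A.pp x y) (A.be z) = A.pp (A.al x) (A.dv y z)) ∧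
  (∀ x y z, A.pp (A.dv x y) (A.be z) = A.pp (A.al x) (A.vd y z)) ∧
  (∀ x y z, A.pp (A.vd x y) (A.be z) = A.vd (A.al x) (A.pp y z)) ∧
  (∀ x y z, A.vd (A.pp x y) (A.be z) = A.vd (A.al x) (A.vd y z)) ∧
  (∀ x y z, A.pp (A.pp x y) (A.be z) = A.pp (A.al x) (A.pp y z))

/-- Multiplicativity: the structure maps are homomorphisms for all three products. -/
def BHTData.IsMult (A : BHTData F T) : Prop :=
  (∀ x y, A.al (A.dv x y) = A.dv (A.al x) (A.al y)) ∧
  (∀ x y, A.al (A.vd x y) = A.vd (A.al x) (A.al y)) ∧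
  (∀ x y, A.al (A.pp x y) = A.pp (A.al x) (A.al y)) ∧
  (∀ x y, A.be (A.dv x y) = A.dv (A.be x) (A.be y)) ∧
  (∀ x y, A.be (A.vd x y) = A.vd (A.be x) (A.be y)) ∧
  (∀ x y, A.be (A.pp x y) = A.pp (A.be x) (A.be y))

/-- A 2-cocycle on `A` with values in the BiHom-module `(V, aV, bV)`:
a triple `(fd, fv, fp)` of bilinear maps `T × T → V`. -/
def IsCocycle (A : BHTData F T) (aV bV : V →ₗ[F] V)
    (fd fv fp : T →ₗ[F] T →ₗ[F] V) : Prop :=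
  (∀ x y, fd (A.al x) (A.al y) = aV (fd x y)) ∧
  (∀ x y, fv (A.al x) (A.al y) = aV (fv x y)) ∧
  (∀ x y, fp (A.al x) (A.al y) = aV (fp x y)) ∧
  (∀ x y, fd (A.be x) (A.be y) = bV (fd x y)) ∧
  (∀ x y, fv (A.be x) (A.be y) = bV (fv x y)) ∧
  (∀ x y, fp (A.be x) (A.be y) = bV (fp x y)) ∧
  (∀ x y z, fd (A.dv x y) (A.be z) = fd (A.al x) (A.dv y z)) ∧
  (∀ x y z, fd (A.dv x y) (A.be z) = fd (A.al x) (A.vd y z)) ∧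
  (∀ x y z, fd (A.vd x y) (A.be z) = fv (A.al x) (A.dv y z)) ∧
  (∀ x y z, fv (A.dv x y) (A.be z) = fv (A.al x) (A.vd y z)) ∧
  (∀ x y z, fv (A.vd x y) (A.be z) = fv (A.al x) (A.vd y z)) ∧
  (∀ x y z, fd (A.dv x y) (A.be z) = fd (A.al x) (A.pp y z)) ∧
  (∀ x y z, fd (A.pp x y) (A.be z) = fp (A.al x) (A.dv y z)) ∧
  (∀ x y z, fp (A.dv x y) (A.be z) = fp (A.al x) (A.vd y z)) ∧
  (∀ x y z, fp (A.vd x y) (A.be z) = fv (A.al x) (A.pp y z)) ∧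
  (∀ x y z, fv (A.pp x y) (A.be z) = fv (A.al x) (A.vd y z)) ∧
  (∀ x y z, fp (A.pp x y) (A.be z) = fp (A.al x) (A.pp y z))

/-- A 2-coboundary: the triple of bilinear maps induced by a linear map
`μ : T → V` commuting with the structure maps. -/
def IsCoboundary (A : BHTData F T) (aV bV : V →ₗ[F] V)
    (fd fv fp : T →ₗ[F] T →ₗ[F] V) : Prop :=
  ∃ μ : T →ₗ[F] V,
    (∀ x, μ (A.al x) = aV (μ x)) ∧
    (∀ x, μ (A.be x) = bV (μ x)) ∧
    (∀ x y, fd x y = μ (A.dv x y)) ∧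
    (∀ x y, fv x y = μ (A.vd x y)) ∧
    (∀ x y, fp x y = μ (A.pp x y))

/-- The bilinear operation `(x+u) ∗' (y+v) = x∗y + f(x,y)` on `T ⊕ V`. -/
def extBil (g : T →ₗ[F] T →ₗ[F] T) (f : T →ₗ[F] T →ₗ[F] V) :
    (T × V) →ₗ[F] (T × V) →ₗ[F] (T × V) :=
  LinearMap.mk₂ F (fun p q => (g p.1 q.1, f p.1 q.1))
    (fun p p' q => by simp [Prod.ext_iff])
    (fun c p q => by simp [Prod.ext_iff])
    (fun p q q' => by simp [Prod.ext_iff])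
    (fun c p q => by simp [Prod.ext_iff])

/-- The trialgebra data `T_F` on `T ⊕ V` built from a triple of bilinear maps. -/
def extData (A : BHTData F T) (aV bV : V →ₗ[F] V)
    (fd fv fp : T →ₗ[F] T →ₗ[F] V) : BHTData F (T × V) where
  dv := extBil A.dv fd
  vd := extBil A.vd fv
  pp := extBil A.pp fp
  al := A.al.prodMap aV
  be := A.be.prodMap bV

/-- A homomorphism of BiHom-associative trialgebras. -/
def IsHom (A : BHTData F T) (B : BHTData F S) (φ : T →ₗ[F] S) : Prop :=
  (∀ x y, φ (A.dv x y) = B.dv (φ x) (φ y)) ∧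
  (∀ x y, φ (A.vd x y) = B.vd (φ x) (φ y)) ∧
  (∀ x y, φ (A.pp x y) = B.pp (φ x) (φ y)) ∧
  (∀ x, φ (A.al x) = B.al (φ x)) ∧
  (∀ x, φ (A.be x) = B.be (φ x))

/-- The center of a BiHom-associative trialgebra. -/
def center (A : BHTData F T) : Set T :=
  {z | ∀ t, A.dv z t = 0 ∧ A.dv t z = 0 ∧ A.vd z t = 0 ∧ A.vd t z = 0 ∧
        A.pp z t = 0 ∧ A.pp t z = 0}

/-- An ideal of a BiHom-associative trialgebra: a subspace closed under the
structure maps and absorbing under all three products. -/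
def IsIdeal (A : BHTData F T) (I : Submodule F T) : Prop :=
  (∀ x ∈ I, A.al x ∈ I) ∧ (∀ x ∈ I, A.be x ∈ I) ∧
  (∀ x ∈ I, ∀ y, A.dv x y ∈ I ∧ A.dv y x ∈ I ∧ A.vd x y ∈ I ∧ A.vd y x ∈ I ∧
      A.pp x y ∈ I ∧ A.pp y x ∈ I)

/-- `D` is a generalized αβ-derivation via the pair `(D', D'')`. -/
def IsGenDer (A : BHTData F T) (D D' D'' : T →ₗ[F] T) : Prop :=
  (∀ x, D (A.al x) = A.al (D x)) ∧ (∀ x, D (A.be x) = A.be (D x)) ∧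
  (∀ x, D' (A.al x) = A.al (D' x)) ∧ (∀ x, D' (A.be x) = A.be (D' x)) ∧
  (∀ x, D'' (A.al x) = A.al (D'' x)) ∧ (∀ x, D'' (A.be x) = A.be (D'' x)) ∧
  (∀ a b, D'' (A.dv a b) = A.dv (D a) (A.al (A.be b)) + A.dv (A.al (A.be a)) (D' b)) ∧
  (∀ a b, D'' (A.vd a b) = A.vd (D a) (A.al (A.be b)) + A.vd (A.al (A.be a)) (D' b)) ∧
  (∀ a b, D'' (A.pp a b) = A.pp (D a) (A.al (A.be b)) + A.pp (A.al (A.be a)) (D' b))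

/-- Transport of structure along a bijective linear map `e`:
`x ∗' y = e (e⁻¹ x ∗ e⁻¹ y)`, `α' = e ∘ α ∘ e⁻¹`, `β' = e ∘ β ∘ e⁻¹`. -/
def transport (A : BHTData F T) (e : T ≃ₗ[F] T) : BHTData F T where
  dv := LinearMap.mk₂ F (fun x y => e (A.dv (e.symm x) (e.symm y)))
    (fun x x' y => by simp) (fun c x y => by simp)
    (fun x y y' => by simp) (fun c x y => by simp)
  vd := LinearMap.mk₂ F (fun x y => e (A.vd (e.symm x) (e.symm y)))
    (fun x x' y => by simp) (fun c x y => by simp)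
    (fun x y y' => by simp) (fun c x y => by simp)
  pp := LinearMap.mk₂ F (fun x y => e (A.pp (e.symm x) (e.symm y)))
    (fun x x' y => by simp) (fun c x y => by simp)
    (fun x y y' => by simp) (fun c x y => by simp)
  al := e.toLinearMap ∘ₗ A.al ∘ₗ e.symm.toLinearMap
  be := e.toLinearMap ∘ₗ A.be ∘ₗ e.symm.toLinearMap

/-- Inverse transport of structure along a bijective linear map `e`:
`x ∗₁ y = e⁻¹ (e x ∗₂ e y)`, `α₁ = e⁻¹ ∘ α₂ ∘ e`, `β₁ = e⁻¹ ∘ β₂ ∘ e`. -/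
def transportInv (A : BHTData F T) (e : T ≃ₗ[F] T) : BHTData F T where
  dv := LinearMap.mk₂ F (fun x y => e.symm (A.dv (e x) (e y)))
    (fun x x' y => by simp) (fun c x y => by simp)
    (fun x y y' => by simp) (fun c x y => by simp)
  vd := LinearMap.mk₂ F (fun x y => e.symm (A.vd (e x) (e y)))
    (fun x x' y => by simp) (fun c x y => by simp)
    (fun x y y' => by simp) (fun c x y => by simp)
  pp := LinearMap.mk₂ F (fun x y => e.symm (A.pp (e x) (e y)))
    (fun x x' y => by simp) (fun c x y => by simp)
    (fun x y y' => by simp) (fun c x y => by simp)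
  al := e.symm.toLinearMap ∘ₗ A.al ∘ₗ e.toLinearMap
  be := e.symm.toLinearMap ∘ₗ A.be ∘ₗ e.toLinearMap

/-! An equivalence of the extensions `T_F → T_G` fixing `V` and lying over `T` is forced to be
a shear `(x, u) ↦ (x, u - μ x)` for a linear `μ : T → V`. Comparing the `V`-components of the
products `(x, 0) ∗ (y, 0)` and of the images of `(x, 0)` under the structure maps, such a shear is
a homomorphism exactly when `μ` commutes with the structure maps and `F - G = μ ∘ ∗`, i.e. when
`μ` exhibits `F - G` as a coboundary. -/

def shear (μ : T →ₗ[F] V) : (T × V) ≃ₗ[F] (T × V) :=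
  (LinearEquiv.refl F T).skewProd (LinearEquiv.refl F V) (-μ)

@[simp]
theorem shear_apply (μ : T →ₗ[F] V) (p : T × V) : shear μ p = (p.1, p.2 - μ p.1) := by
  simp [shear, LinearEquiv.skewProd_apply, sub_eq_add_neg]

theorem exists_eq_shear {φ : (T × V) →ₗ[F] (T × V)} (hV : ∀ v, φ (0, v) = (0, v))
    (hT : ∀ p, (φ p).1 = p.1) : ∃ μ : T →ₗ[F] V, φ = (shear μ).toLinearMap := by
  refine ⟨-(LinearMap.snd F T V ∘ₗ φ ∘ₗ LinearMap.inl F T V), LinearMap.ext fun p => ?_⟩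
  have hinl : φ (p.1, 0) = (p.1, (φ (p.1, 0)).2) := Prod.ext (hT _) rfl
  calc φ p = φ (p.1, 0) + φ (0, p.2) := by rw [← map_add, Prod.mk_add_mk, add_zero, zero_add]
    _ = _ := by rw [hinl, hV]; ext <;> simp [add_comm]

theorem map_extBil_shear_iff (g : T →ₗ[F] T →ₗ[F] T) (f f' : T →ₗ[F] T →ₗ[F] V)
    (μ : T →ₗ[F] V) :
    (∀ p q, shear μ (extBil g f p q) = extBil g f' (shear μ p) (shear μ q)) ↔
      ∀ x y, (f - f') x y = μ (g x y) := by
  simp only [extBil, LinearMap.mk₂_apply, shear_apply, Prod.mk.injEq, true_and,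
    LinearMap.sub_apply]
  constructor
  · intro h x y
    rw [← h (x, 0) (y, 0)]
    abel
  · intro h p q
    rw [← sub_eq_zero, ← h]
    abel

theorem shear_comp_prodMap_iff (a : T →ₗ[F] T) (aV : V →ₗ[F] V) (μ : T →ₗ[F] V) :
    (∀ p, shear μ (a.prodMap aV p) = a.prodMap aV (shear μ p)) ↔ ∀ x, μ (a x) = aV (μ x) := by
  simp only [LinearMap.prodMap_apply, shear_apply, Prod.mk.injEq, true_and, map_sub,
    sub_right_inj]
  exact ⟨fun h x => h (x, 0), fun h p => h p.1⟩

theorem isHom_extData_shear_iff (A : BHTData F T) (aV bV : V →ₗ[F] V)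
    (fd fv fp gd gv gp : T →ₗ[F] T →ₗ[F] V) (μ : T →ₗ[F] V) :
    IsHom (extData A aV bV fd fv fp) (extData A aV bV gd gv gp) (shear μ).toLinearMap ↔
      (∀ x, μ (A.al x) = aV (μ x)) ∧ (∀ x, μ (A.be x) = bV (μ x)) ∧
      (∀ x y, (fd - gd) x y = μ (A.dv x y)) ∧ (∀ x y, (fv - gv) x y = μ (A.vd x y)) ∧
      (∀ x y, (fp - gp) x y = μ (A.pp x y)) := by
  simp only [IsHom, extData, LinearEquiv.coe_coe, map_extBil_shear_iff, shear_comp_prodMap_iff]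
  tauto

theorem extensions_equivalent_iff_cohomologous_general
    (A : BHTData F T)
    (aV bV : V →ₗ[F] V)
    (fd fv fp gd gv gp : T →ₗ[F] T →ₗ[F] V) :
    (∃ φ : (T × V) →ₗ[F] (T × V), Function.Bijective ⇑φ ∧
      IsHom (extData A aV bV fd fv fp) (extData A aV bV gd gv gp) φ ∧
      (∀ v : V, φ (0, v) = (0, v)) ∧
      (∀ p : T × V, (φ p).1 = p.1)) ↔
    IsCoboundary A aV bV (fd - gd) (fv - gv) (fp - gp) := by
  constructor
  · rintro ⟨φ, -, hφ, hV, hT⟩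
    obtain ⟨μ, rfl⟩ := exists_eq_shear hV hT
    exact ⟨μ, (isHom_extData_shear_iff A aV bV fd fv fp gd gv gp μ).1 hφ⟩
  · rintro ⟨μ, hμ⟩
    exact ⟨shear μ, (shear μ).bijective,
      (isHom_extData_shear_iff A aV bV fd fv fp gd gv gp μ).2 hμ,
      fun v => by simp, fun p => by simp⟩

/-- the central extensions `T_F` and `T_G` are equivalent iff `F − G` is a
2-coboundary; i.e. equivalence classes of central extensions correspond to `H²(T,V)`. -/
theorem extensions_equivalent_iff_cohomologous
    (A : BHTData F T) (hA : A.IsBHT) (hM : A.IsMult)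
    (aV bV : V →ₗ[F] V) (hV : ∀ v, aV (bV v) = bV (aV v))
    (fd fv fp gd gv gp : T →ₗ[F] T →ₗ[F] V)
    (hF : IsCocycle A aV bV fd fv fp) (hG : IsCocycle A aV bV gd gv gp) :
    (∃ φ : (T × V) →ₗ[F] (T × V), Function.Bijective ⇑φ ∧
      IsHom (extData A aV bV fd fv fp) (extData A aV bV gd gv gp) φ ∧
      (∀ v : V, φ (0, v) = (0, v)) ∧
      (∀ p : T × V, (φ p).1 = p.1)) ↔
    IsCoboundary A aV bV (fd - gd) (fv - gv) (fp - gp) :=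
  extensions_equivalent_iff_cohomologous_general A aV bV fd fv fp gd gv gp
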